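/- Let n ≥ 1, λ : Fin n → ℝ, U an n×n real orthogonal matrix (Uᵀ U = I_n), L = U (Matrix.diagonal λ) Uᵀ, and fix τ > 0, c, x₀ ∈ ℝⁿ. Define the sampled observations y k = cᵀ *ᵥ (exp(−(k*τ) • L) *ᵥ x₀) for k ∈ ℕ, the weights ω i = (Uᵀ *ᵥ c) i * (Uᵀ *ᵥ x₀) i, the grouped weight ω̄(μ) = Σ_{j : λ j = μ} ω j, and the support S = { Real.exp(−μ*τ) : μ ∈ Set.range λ, ω̄(μ) ≠ 0 }; let r = |S| and assume r ≥ 1. Then the r×r Hankel matrix H_r with (H_r) s t = y (s + t) is invertible, and with α = −H_r⁻¹ *ᵥ (y r, …, y (2r−1)), the polynomial X^r + Σ_{j<r} α_j X^j equals Π_{z ∈ S} (X − z); in particular, for every eigenvalue value μ of L with ω̄(μ) ≠ 0, the number e^{−μτ} is a root of this polynomial. -/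

import Mathlib

/-!
Diagonalising `L = U diag(l) Uᵀ` turns the samples into a power sum
`y k = ∑_μ ω̄(μ) (e^{-μτ})^k` over the eigenvalue values of nonzero grouped weight; its nodes
`e^{-μτ}` are distinct because `τ ≠ 0`. For such a power sum with `m` distinct nodes `z_j` and
nonzero weights `w_j` (Prony's method), the `m × m` Hankel matrix factors as `Vᵀ diag(w) V` with
`V` the Vandermonde matrix of the nodes, so it is invertible; and the coefficients of any monic
degree-`m` polynomial `p` vanishing at the nodes solve the Hankel system, because row `s` of the
system reads `∑_j w_j z_j^s p(z_j) = 0`. Hence `α` is the coefficient vector of `∏ (X - z)`.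
-/

open Matrix Polynomial Finset

def hankel {α : Type*} (y : ℕ → α) (m : ℕ) : Matrix (Fin m) (Fin m) α :=
  of fun s t => y (s + t)

theorem Polynomial.Monic.eq_X_pow_add_sum_fin {R : Type*} [Semiring R] {p : R[X]} {m : ℕ}
    (hp : p.Monic) (hdeg : p.natDegree = m) :
    p = X ^ m + ∑ i : Fin m, C (p.coeff i) * X ^ (i : ℕ) := by
  conv_lhs => rw [hp.as_sum, hdeg]
  rw [Fin.sum_univ_eq_sum_range (fun i => C (p.coeff i) * X ^ i)]

section Prony

variable {K : Type*} [Field K] {m : ℕ} {z w : Fin m → K} {y : ℕ → K}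

theorem hankel_eq_transpose_vandermonde_mul (hy : ∀ k, y k = ∑ j, w j * z j ^ k) :
    hankel y m = (vandermonde z)ᵀ * diagonal w * vandermonde z := by
  ext s t
  rw [mul_apply]
  simp only [hankel, of_apply, hy, mul_diagonal, transpose_apply, vandermonde_apply, pow_add]
  exact sum_congr rfl fun j _ => by ring

theorem isUnit_hankel (hy : ∀ k, y k = ∑ j, w j * z j ^ k) (hz : Function.Injective z)
    (hw : ∀ j, w j ≠ 0) : IsUnit (hankel y m) := by
  have hV : (vandermonde z).det ≠ 0 := det_vandermonde_ne_zero_iff.2 hz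
  rw [isUnit_iff_isUnit_det, isUnit_iff_ne_zero, hankel_eq_transpose_vandermonde_mul hy,
    det_mul, det_mul, det_transpose, det_diagonal]
  exact mul_ne_zero (mul_ne_zero hV (prod_ne_zero_iff.2 fun j _ => hw j)) hV

theorem hankel_mulVec_coeff (hy : ∀ k, y k = ∑ j, w j * z j ^ k) {p : K[X]} (hp : p.Monic)
    (hdeg : p.natDegree = m) (hroot : ∀ j, p.IsRoot (z j)) :
    hankel y m *ᵥ (fun i => p.coeff i) = -fun i : Fin m => y (m + i) := by
  have heval (j) : z j ^ m + ∑ i : Fin m, p.coeff i * z j ^ (i : ℕ) = 0 := by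
    have h := congrArg (eval (z j)) (hp.eq_X_pow_add_sum_fin hdeg)
    simpa [eval_finsetSum, (hroot j).eq_zero, eq_comm] using h
  funext s
  rw [Pi.neg_apply, eq_neg_iff_add_eq_zero]
  simp only [mulVec, dotProduct, hankel, of_apply, hy, sum_mul, pow_add]
  rw [sum_comm, ← sum_add_distrib]
  refine sum_eq_zero fun j _ => ?_
  calc _ = w j * z j ^ (s : ℕ) * (z j ^ m + ∑ i : Fin m, p.coeff i * z j ^ (i : ℕ)) := by
        rw [mul_add, mul_sum, add_comm]
        congr 1
        · ring
        · exact sum_congr rfl fun i _ => by ring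
    _ = 0 := by rw [heval, mul_zero]

theorem neg_inv_hankel_mulVec_eq_coeff (hy : ∀ k, y k = ∑ j, w j * z j ^ k)
    (hz : Function.Injective z) (hw : ∀ j, w j ≠ 0) {p : K[X]} (hp : p.Monic)
    (hdeg : p.natDegree = m) (hroot : ∀ j, p.IsRoot (z j)) :
    -((hankel y m)⁻¹ *ᵥ fun i : Fin m => y (m + i)) = fun i : Fin m => p.coeff i := by
  have hdet := (isUnit_iff_isUnit_det _).1 (isUnit_hankel hy hz hw)
  rw [← neg_neg fun i : Fin m => y (m + i), ← hankel_mulVec_coeff hy hp hdeg hroot, mulVec_neg,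
    neg_neg, mulVec_mulVec, nonsing_inv_mul _ hdet, one_mulVec]

theorem prony (hy : ∀ k, y k = ∑ j, w j * z j ^ k) (hz : Function.Injective z)
    (hw : ∀ j, w j ≠ 0) {p : K[X]} (hp : p.Monic) (hdeg : p.natDegree = m)
    (hroot : ∀ j, p.IsRoot (z j)) :
    IsUnit (hankel y m) ∧
      X ^ m + ∑ j : Fin m,
        C ((-((hankel y m)⁻¹ *ᵥ fun i : Fin m => y (m + i))) j) * X ^ (j : ℕ) = p := by
  refine ⟨isUnit_hankel hy hz hw, ?_⟩
  rw [neg_inv_hankel_mulVec_eq_coeff hy hz hw hp hdeg hroot]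
  exact (hp.eq_X_pow_add_sum_fin hdeg).symm

theorem prony_finset {R : Type*} {M : Finset R} {e : R → K} (he : Set.InjOn e M) {W : R → K}
    (hW : ∀ μ ∈ M, W μ ≠ 0) (hy : ∀ k, y k = ∑ μ ∈ M, W μ * e μ ^ k) {p : K[X]}
    (hp : p.Monic) (hdeg : p.natDegree = M.card) (hroot : ∀ μ ∈ M, p.IsRoot (e μ)) :
    IsUnit (hankel y M.card) ∧
      X ^ M.card + ∑ j : Fin M.card,
        C ((-((hankel y M.card)⁻¹ *ᵥ fun i : Fin M.card => y (M.card + i))) j) * X ^ (j : ℕ)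
          = p := by
  let μ : Fin M.card → R := fun j => M.equivFin.symm j
  have hμ (j) : μ j ∈ M := (M.equivFin.symm j).2
  refine prony (z := e ∘ μ) (w := W ∘ μ) (fun k => ?_) (fun i j hij => ?_)
    (fun j => hW _ (hμ j)) hp hdeg (fun j => hroot _ (hμ j))
  · rw [hy, ← M.sum_coe_sort]
    exact (M.equivFin.symm.sum_comp fun ν : M => W ν * e ν ^ k).symm
  · exact M.equivFin.symm.injective (Subtype.ext (he (hμ i) (hμ j) hij))

end Prony

section Spectral
variable {ι : Type*} [Fintype ι] [DecidableEq ι]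

theorem exp_smul_conj_diagonal {U : Matrix ι ι ℝ} (hU : Uᵀ * U = 1) (l : ι → ℝ) (t : ℝ) :
    NormedSpace.exp (t • (U * diagonal l * Uᵀ)) =
      U * diagonal (fun i => Real.exp (t * l i)) * Uᵀ := by
  have hUinv : U⁻¹ = Uᵀ := inv_eq_left_inv hU
  have hUunit : IsUnit U := (isUnit_iff_isUnit_det U).2 (isUnit_det_of_left_inverse hU)
  rw [← hUinv, ← smul_mul_assoc, ← mul_smul_comm, ← diagonal_smul, exp_conj U _ hUunit,
    exp_diagonal, Pi.exp_def, Real.exp_eq_exp_ℝ]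
  rfl

theorem dotProduct_conj_diagonal_mulVec {R : Type*} [CommSemiring R] (U : Matrix ι ι R)
    (d c x : ι → R) :
    c ⬝ᵥ ((U * diagonal d * Uᵀ) *ᵥ x) = ∑ i, (Uᵀ *ᵥ c) i * (Uᵀ *ᵥ x) i * d i := by
  rw [← mulVec_mulVec, ← mulVec_mulVec, dotProduct_mulVec, ← mulVec_transpose]
  simp only [dotProduct, mulVec_diagonal]
  exact sum_congr rfl fun i _ => by ring

end Spectral

section GroupedWeight
variable {ι R K : Type*} [Fintype ι] [DecidableEq R] [DecidableEq K]

def groupedWeight [AddCommMonoid K] (l : ι → R) (ω : ι → K) (μ : R) : K :=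
  ∑ j ∈ univ.filter (fun j => l j = μ), ω j

def weightSupport [AddCommMonoid K] (l : ι → R) (ω : ι → K) : Finset R :=
  (univ.image l).filter (fun μ => groupedWeight l ω μ ≠ 0)

theorem sum_mul_eq_sum_weightSupport [NonUnitalNonAssocSemiring K] (l : ι → R) (ω : ι → K)
    (f : R → K) :
    ∑ i, ω i * f (l i) = ∑ μ ∈ weightSupport l ω, groupedWeight l ω μ * f μ := by
  rw [weightSupport, sum_filter_of_ne fun μ _ h => left_ne_zero_of_mul h,
    ← sum_fiberwise_of_maps_to (g := l) fun i _ => mem_image_of_mem l (mem_univ i)]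
  refine sum_congr rfl fun μ _ => ?_
  rw [groupedWeight, sum_mul]
  exact sum_congr rfl fun i hi => by rw [(mem_filter.1 hi).2]

end GroupedWeight

theorem ct_laplacian_eigenvalue_recovery_general (n : ℕ) (l : Fin n → ℝ)
    (U : Matrix (Fin n) (Fin n) ℝ) (hU : Uᵀ * U = 1)
    (L : Matrix (Fin n) (Fin n) ℝ) (hL : L = U * Matrix.diagonal l * Uᵀ)
    (τ : ℝ) (hτ : 0 < τ) (c x₀ : Fin n → ℝ)
    (y : ℕ → ℝ)
    (hy : ∀ k : ℕ, y k = c ⬝ᵥ (NormedSpace.exp ((-((k : ℝ) * τ)) • L) *ᵥ x₀))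
    (ω : Fin n → ℝ) (hω : ω = fun i => (Uᵀ *ᵥ c) i * (Uᵀ *ᵥ x₀) i)
    (S : Finset ℝ)
    (hS : S = ((Finset.univ.image l).filter
        (fun μ => ∑ j ∈ Finset.univ.filter (fun j => l j = μ), ω j ≠ 0)).image
        (fun μ => Real.exp (-μ * τ)))
    (r : ℕ) (hr : r = S.card)
    (Hr : Matrix (Fin r) (Fin r) ℝ)
    (hHr : Hr = Matrix.of fun s t : Fin r => y ((s : ℕ) + (t : ℕ)))
    (α : Fin r → ℝ) (hα : α = -(Hr⁻¹ *ᵥ fun j : Fin r => y (r + (j : ℕ)))) :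
    IsUnit Hr ∧
      (Polynomial.X ^ r + ∑ j : Fin r, Polynomial.C (α j) * Polynomial.X ^ (j : ℕ)) =
        ∏ z ∈ S, (Polynomial.X - Polynomial.C z) ∧
      ∀ μ ∈ Set.range l,
        (∑ j ∈ Finset.univ.filter (fun j => l j = μ), ω j) ≠ 0 →
        (Polynomial.X ^ r + ∑ j : Fin r, Polynomial.C (α j) * Polynomial.X ^ (j : ℕ)).IsRoot
          (Real.exp (-μ * τ)) := by
  set e : ℝ → ℝ := fun μ => Real.exp (-μ * τ)
  have he : Function.Injective e := fun a b h => by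
    simpa [e, hτ.ne'] using Real.exp_injective h
  have hSM : S = (weightSupport l ω).image e := hS
  have hrM : r = (weightSupport l ω).card := by rw [hr, hSM, card_image_of_injective _ he]
  subst hrM hHr hα
  have hyM (k : ℕ) : y k = ∑ μ ∈ weightSupport l ω, groupedWeight l ω μ * e μ ^ k := by
    rw [hy, hL, exp_smul_conj_diagonal hU, dotProduct_conj_diagonal_mulVec,
      ← sum_mul_eq_sum_weightSupport, hω]
    refine sum_congr rfl fun i _ => ?_
    rw [← Real.exp_nat_mul]
    ring_nf
  have hroot (μ) (hμ : μ ∈ weightSupport l ω) : (∏ z ∈ S, (X - C z)).IsRoot (e μ) :=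
    (isRoot_prod _ _ _).2 ⟨e μ, hSM ▸ mem_image_of_mem e hμ, root_X_sub_C.2 rfl⟩
  obtain ⟨hunit, hpoly⟩ := prony_finset (M := weightSupport l ω) he.injOn
    (fun μ hμ => (mem_filter.1 hμ).2) hyM (monic_prod_X_sub_C id S)
    ((natDegree_finsetProd_X_sub_C_eq_card S id).trans hr.symm) hroot
  refine ⟨hunit, hpoly, fun μ ⟨i, hi⟩ hμ => hpoly ▸ hroot μ ?_⟩
  exact mem_filter.2 ⟨hi ▸ mem_image_of_mem l (mem_univ i), hμ⟩

/-- **Theorem 1 applied to the continuous-time single-integrator network.** The sampled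
observations `y_k = cᵀ e^{-Lkτ} x₀` give an invertible Hankel matrix of size `r = |S|`,
where `S = {e^{-μτ} : μ eigenvalue with nonzero grouped weight}`, and the polynomial with
coefficients `α = -H_r⁻¹ (y_r, …, y_{2r-1})` equals `Π_{z ∈ S} (X - z)`; in particular
`e^{-μτ}` is a root for each eigenvalue value `μ` with nonzero grouped weight. -/
theorem ct_laplacian_eigenvalue_recovery (n : ℕ) (hn : 1 ≤ n) (l : Fin n → ℝ)
    (U : Matrix (Fin n) (Fin n) ℝ) (hU : Uᵀ * U = 1)
    (L : Matrix (Fin n) (Fin n) ℝ) (hL : L = U * Matrix.diagonal l * Uᵀ)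
    (τ : ℝ) (hτ : 0 < τ) (c x₀ : Fin n → ℝ)
    (y : ℕ → ℝ)
    (hy : ∀ k : ℕ, y k = c ⬝ᵥ (NormedSpace.exp ((-((k : ℝ) * τ)) • L) *ᵥ x₀))
    (ω : Fin n → ℝ) (hω : ω = fun i => (Uᵀ *ᵥ c) i * (Uᵀ *ᵥ x₀) i)
    (S : Finset ℝ)
    (hS : S = ((Finset.univ.image l).filter
        (fun μ => ∑ j ∈ Finset.univ.filter (fun j => l j = μ), ω j ≠ 0)).image
        (fun μ => Real.exp (-μ * τ)))
    (r : ℕ) (hr : r = S.card) (hr1 : 1 ≤ r)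
    (Hr : Matrix (Fin r) (Fin r) ℝ)
    (hHr : Hr = Matrix.of fun s t : Fin r => y ((s : ℕ) + (t : ℕ)))
    (α : Fin r → ℝ) (hα : α = -(Hr⁻¹ *ᵥ fun j : Fin r => y (r + (j : ℕ)))) :
    IsUnit Hr ∧
      (Polynomial.X ^ r + ∑ j : Fin r, Polynomial.C (α j) * Polynomial.X ^ (j : ℕ)) =
        ∏ z ∈ S, (Polynomial.X - Polynomial.C z) ∧
      ∀ μ ∈ Set.range l,
        (∑ j ∈ Finset.univ.filter (fun j => l j = μ), ω j) ≠ 0 →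
        (Polynomial.X ^ r + ∑ j : Fin r, Polynomial.C (α j) * Polynomial.X ^ (j : ℕ)).IsRoot
          (Real.exp (-μ * τ)) :=
  ct_laplacian_eigenvalue_recovery_general n l U hU L hL τ hτ c x₀ y hy ω hω S hS r hr Hr hHr α hα
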